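/- Transformation optics for the heat equation (weak form): let n ≥ 1, ρ > 0, and let F : ℝⁿ → ℝⁿ be a C¹ diffeomorphism with F(x) = x for all x outside the ball B_ρ = B(0,ρ) and det DF(x) ≥ C > 0 for all x. Let A : ℝⁿ → (n×n real matrices) be measurable and locally bounded. Let U : ℝⁿ × (0,∞) → ℝ be such that U(·,t) is C¹ for each t and ∂_t U exists and is continuous, and set V(y,t) := U(F⁻¹(y), t), (F_*1)(y) := 1/det DF(F⁻¹(y)), and (F_*A)(y) := [ DF(x) A(x) DF(x)ᵀ / det DF(x) ] at x = F⁻¹(y). Then: (i) for every t > 0, ∫ ∂_tU(x,t) φ(x) dx + ∫ ⟨A(x)∇_xU(x,t), ∇φ(x)⟩ dx = 0 holds for all compactly supported C¹ test functions φ if and only if ∫ (F_*1)(y) ∂_tV(y,t) ψ(y) dy + ∫ ⟨(F_*A)(y)∇_yV(y,t), ∇ψ(y)⟩ dy = 0 holds for all compactly supported C¹ test functions ψ; and (ii) U(x,t) = V(x,t) for all t > 0 and all x ∈ ℝⁿ \ B_ρ. -/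

import Mathlib

open MeasureTheory
open scoped Matrix

/-- The gradient vector of `f : ℝⁿ → ℝ` at `x`, with components `∂f/∂xᵢ(x)`. -/
noncomputable def gradVec (n : ℕ) (f : (Fin n → ℝ) → ℝ) (x : Fin n → ℝ) : Fin n → ℝ :=
  fun i => fderiv ℝ f x (Pi.single i 1)

/-- The Jacobian matrix `DF(x) = (∂Fᵢ/∂xⱼ(x))` of `F : ℝⁿ → ℝⁿ` at `x`. -/
noncomputable def jacMatrix (n : ℕ) (F : (Fin n → ℝ) → Fin n → ℝ) (x : Fin n → ℝ) :
    Matrix (Fin n) (Fin n) ℝ :=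
  Matrix.of fun i j => fderiv ℝ F x (Pi.single j 1) i

lemma clm_apply_eq_mulVec {n : ℕ} (L : (Fin n → ℝ) →L[ℝ] (Fin n → ℝ)) (v : Fin n → ℝ) :
    L v = (Matrix.of fun i j => L (Pi.single j 1) i).mulVec v := by
  conv_lhs => rw [← Finset.univ_sum_single v]
  have h : ∀ j : Fin n, Pi.single j (v j) = v j • (Pi.single j 1 : Fin n → ℝ) := by
    intro j; rw [← Pi.single_smul, smul_eq_mul, mul_one]
  rw [map_sum]
  funext i
  simp only [h, _root_.map_smul]
  simp [Matrix.mulVec, dotProduct, Finset.sum_apply, mul_comm]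

lemma fderiv_eq_mulVec {n : ℕ} (f : (Fin n → ℝ) → Fin n → ℝ) (x v : Fin n → ℝ) :
    fderiv ℝ f x v = (jacMatrix n f x).mulVec v :=
  clm_apply_eq_mulVec (fderiv ℝ f x) v

lemma fderiv_eq_dot {n : ℕ} (f : (Fin n → ℝ) → ℝ) (x v : Fin n → ℝ) :
    fderiv ℝ f x v = dotProduct v (gradVec n f x) := by
  conv_lhs => rw [← Finset.univ_sum_single v]
  have h : ∀ j : Fin n, Pi.single j (v j) = v j • (Pi.single j 1 : Fin n → ℝ) := by
    intro j; rw [← Pi.single_smul, smul_eq_mul, mul_one]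
  rw [map_sum]
  simp only [h, _root_.map_smul]
  simp [dotProduct, gradVec, smul_eq_mul]

lemma gradVec_comp {n : ℕ} (g : (Fin n → ℝ) → ℝ) (f : (Fin n → ℝ) → Fin n → ℝ)
    (x : Fin n → ℝ) (hg : DifferentiableAt ℝ g (f x)) (hf : DifferentiableAt ℝ f x) :
    gradVec n (fun y => g (f y)) x = (jacMatrix n f x)ᵀ.mulVec (gradVec n g (f x)) := by
  funext i
  have hc : fderiv ℝ (fun y => g (f y)) x = (fderiv ℝ g (f x)).comp (fderiv ℝ f x) :=
    fderiv_comp x hg hf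
  simp only [gradVec, hc, ContinuousLinearMap.comp_apply]
  rw [fderiv_eq_mulVec, fderiv_eq_dot]
  simp [Matrix.mulVec, dotProduct, Matrix.transpose_apply, jacMatrix,
    Pi.single_apply, Finset.sum_ite_eq', mul_comm]

lemma jacMatrix_comp {n : ℕ} (f g : (Fin n → ℝ) → Fin n → ℝ) (x : Fin n → ℝ)
    (hf : DifferentiableAt ℝ f (g x)) (hg : DifferentiableAt ℝ g x) :
    jacMatrix n (fun y => f (g y)) x = jacMatrix n f (g x) * jacMatrix n g x := by
  ext i j
  have hc : fderiv ℝ (fun y => f (g y)) x = (fderiv ℝ f (g x)).comp (fderiv ℝ g x) :=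
    fderiv_comp x hf hg
  simp only [jacMatrix, Matrix.of_apply, hc, ContinuousLinearMap.comp_apply]
  rw [fderiv_eq_mulVec, fderiv_eq_mulVec, Matrix.mulVec_mulVec]
  simp [jacMatrix, Matrix.mulVec, dotProduct, Pi.single_apply, Finset.sum_ite_eq']

lemma jacMatrix_id {n : ℕ} (x : Fin n → ℝ) : jacMatrix n (fun y => y) x = 1 := by
  ext i j
  simp [jacMatrix, fderiv_id', Matrix.one_apply, Pi.single_apply, eq_comm]

lemma clm_det_eq {n : ℕ} (L : (Fin n → ℝ) →L[ℝ] (Fin n → ℝ)) :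
    L.det = (Matrix.of fun i j => L (Pi.single j 1) i).det := by
  have h : LinearMap.toMatrix (Pi.basisFun ℝ (Fin n)) (Pi.basisFun ℝ (Fin n))
      (L : (Fin n → ℝ) →ₗ[ℝ] (Fin n → ℝ)) = Matrix.of fun i j => L (Pi.single j 1) i := by
    ext i j
    rw [LinearMap.toMatrix_apply]
    simp [Pi.basisFun_apply, Pi.basisFun_repr]
  rw [ContinuousLinearMap.det, ← LinearMap.det_toMatrix (Pi.basisFun ℝ (Fin n)), h]

lemma integral_cov {n : ℕ} (F : (Fin n → ℝ) → Fin n → ℝ)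
    (hF : ContDiff ℝ 1 F) (hinj : Function.Injective F) (hsurj : Function.Surjective F)
    (C : ℝ) (hC : 0 < C) (hdet : ∀ x, C ≤ (jacMatrix n F x).det)
    (g : (Fin n → ℝ) → ℝ) :
    ∫ y, g y = ∫ x, (jacMatrix n F x).det * g (F x) := by
  have hd : ∀ x ∈ Set.univ, HasFDerivWithinAt F (fderiv ℝ F x) Set.univ x := fun x _ =>
    ((hF.differentiable one_ne_zero x).hasFDerivAt).hasFDerivWithinAt
  have key := MeasureTheory.integral_image_eq_integral_abs_det_fderiv_smul
    (volume : MeasureTheory.Measure (Fin n → ℝ)) MeasurableSet.univ hd hinj.injOn g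
  rw [Set.image_univ, hsurj.range_eq, MeasureTheory.setIntegral_univ,
    MeasureTheory.setIntegral_univ] at key
  rw [key]
  congr 1
  funext x
  have hdx : (fderiv ℝ F x).det = (jacMatrix n F x).det := clm_det_eq _
  rw [hdx, abs_of_pos (lt_of_lt_of_le hC (hdet x)), smul_eq_mul]

/-- Transformation optics for the heat equation (weak form). Let `F`
be a `C¹` diffeomorphism of `ℝⁿ` which is the identity outside the ball `B(0,ρ)`,
with `det DF ≥ C > 0`, and let `A` be measurable and locally bounded. With
`V(y,t) = U(F⁻¹(y),t)`, `(F_*1)(y) = 1/det DF(F⁻¹(y))` and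
`(F_*A)(y) = DF A DFᵀ / det DF` at `x = F⁻¹(y)`: (i) for every `t > 0`, `U(·,t)`
satisfies the weak formulation of `∂_tU = div(A∇U)` iff `V(·,t)` satisfies the weak
formulation of `F_*1 ∂_tV = div(F_*A ∇V)`; and (ii) `U(x,t) = V(x,t)` for all
`t > 0` and all `x` outside `B(0,ρ)`. -/
theorem heat_equation_transformation_optics (n : ℕ) (hn : 1 ≤ n) (ρ : ℝ) (hρ : 0 < ρ)
    (F Finv : (Fin n → ℝ) → Fin n → ℝ)
    (hF : ContDiff ℝ 1 F) (hFinv : ContDiff ℝ 1 Finv)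
    (hleft : Function.LeftInverse Finv F) (hright : Function.RightInverse Finv F)
    (hFid : ∀ x ∉ Metric.ball (0 : Fin n → ℝ) ρ, F x = x)
    (C : ℝ) (hC : 0 < C) (hdet : ∀ x, C ≤ (jacMatrix n F x).det)
    (A : (Fin n → ℝ) → Matrix (Fin n) (Fin n) ℝ)
    (hA : ∀ i j, Measurable fun x => A x i j)
    (hAloc : ∀ x : Fin n → ℝ, ∃ M : ℝ, ∀ᶠ y in nhds x, ∀ i j, |A y i j| ≤ M)
    (U U' : (Fin n → ℝ) → ℝ → ℝ)
    (hU : ∀ t, 0 < t → ContDiff ℝ 1 (fun x => U x t))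
    (hU' : ∀ x t, 0 < t → HasDerivAt (U x) (U' x t) t)
    (hU'cont : ContinuousOn (fun q : (Fin n → ℝ) × ℝ => U' q.1 q.2)
      {q : (Fin n → ℝ) × ℝ | 0 < q.2}) :
    (∀ t, 0 < t →
      ((∀ φ : (Fin n → ℝ) → ℝ, ContDiff ℝ 1 φ → HasCompactSupport φ →
          (∫ x, U' x t * φ x) +
            (∫ x, dotProduct ((A x).mulVec (gradVec n (fun x' => U x' t) x))
              (gradVec n φ x)) = 0) ↔
        (∀ ψ : (Fin n → ℝ) → ℝ, ContDiff ℝ 1 ψ → HasCompactSupport ψ →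
          (∫ y, (1 / (jacMatrix n F (Finv y)).det) * U' (Finv y) t * ψ y) +
            (∫ y, (1 / (jacMatrix n F (Finv y)).det) *
              dotProduct
                ((jacMatrix n F (Finv y) * A (Finv y) * (jacMatrix n F (Finv y))ᵀ).mulVec
                  (gradVec n (fun y' => U (Finv y') t) y))
                (gradVec n ψ y)) = 0))) ∧
    (∀ t, 0 < t → ∀ x ∉ Metric.ball (0 : Fin n → ℝ) ρ, U x t = U (Finv x) t) := by
  have hl : ∀ x, Finv (F x) = x := hleft
  have hinj : Function.Injective F := hleft.injective
  have hsurj : Function.Surjective F := hright.surjective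
  have hdetpos : ∀ x, (0 : ℝ) < (jacMatrix n F x).det := fun x => lt_of_lt_of_le hC (hdet x)
  refine ⟨?_, ?_⟩
  · intro t ht
    have hu : ContDiff ℝ 1 (fun x => U x t) := hU t ht
    have hJK : ∀ x, (jacMatrix n F x)ᵀ * (jacMatrix n Finv (F x))ᵀ = 1 := by
      intro x
      have h1 : jacMatrix n (fun y => Finv (F y)) x =
          jacMatrix n Finv (F x) * jacMatrix n F x :=
        jacMatrix_comp _ _ _ (hFinv.differentiable one_ne_zero _) (hF.differentiable one_ne_zero _)
      have h2 : (fun y => Finv (F y)) = fun y => y := funext hleft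
      rw [h2, jacMatrix_id] at h1
      rw [← Matrix.transpose_mul, ← h1, Matrix.transpose_one]
    let e : (Fin n → ℝ) ≃ₜ (Fin n → ℝ) :=
      { toEquiv := ⟨F, Finv, hleft, hright⟩
        continuous_toFun := hF.continuous
        continuous_invFun := hFinv.continuous }
    have key1 : ∀ ψ : (Fin n → ℝ) → ℝ,
        (∫ y, (1 / (jacMatrix n F (Finv y)).det) * U' (Finv y) t * ψ y)
          = ∫ x, U' x t * ψ (F x) := by
      intro ψ
      rw [integral_cov F hF hinj hsurj C hC hdet]
      congr 1
      funext x
      rw [hl x]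
      have h0 := (hdetpos x).ne'
      field_simp
    have key2 : ∀ ψ : (Fin n → ℝ) → ℝ, ContDiff ℝ 1 ψ →
        (∫ y, (1 / (jacMatrix n F (Finv y)).det) *
            dotProduct
              ((jacMatrix n F (Finv y) * A (Finv y) * (jacMatrix n F (Finv y))ᵀ).mulVec
                (gradVec n (fun y' => U (Finv y') t) y))
              (gradVec n ψ y))
          = ∫ x, dotProduct ((A x).mulVec (gradVec n (fun x' => U x' t) x))
              (gradVec n (fun x' => ψ (F x')) x) := by
      intro ψ hψ
      rw [integral_cov F hF hinj hsurj C hC hdet]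
      congr 1
      funext x
      have hgv : gradVec n (fun y' => U (Finv y') t) (F x) =
          (jacMatrix n Finv (F x))ᵀ.mulVec (gradVec n (fun x' => U x' t) x) := by
        have h3 := gradVec_comp (fun x' => U x' t) Finv (F x)
          (by rw [hl x]; exact hu.differentiable one_ne_zero _) (hFinv.differentiable one_ne_zero _)
        rw [hl x] at h3
        exact h3
      have hgφ : gradVec n (fun x' => ψ (F x')) x =
          (jacMatrix n F x)ᵀ.mulVec (gradVec n ψ (F x)) :=
        gradVec_comp ψ F x (hψ.differentiable one_ne_zero _) (hF.differentiable one_ne_zero _)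
      rw [hl x, hgv, hgφ]
      set J := jacMatrix n F x with hJ
      set K := jacMatrix n Finv (F x) with hK
      set g := gradVec n (fun x' => U x' t) x with hg
      set h := gradVec n ψ (F x) with hh
      have hm : (J * A x * Jᵀ).mulVec (Kᵀ.mulVec g) = J.mulVec ((A x).mulVec g) := by
        rw [Matrix.mulVec_mulVec, mul_assoc (J * A x) Jᵀ Kᵀ, hJK x, mul_one,
          ← Matrix.mulVec_mulVec]
      rw [hm]
      have hdot : dotProduct (J.mulVec ((A x).mulVec g)) h =
          dotProduct ((A x).mulVec g) (Jᵀ.mulVec h) := by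
        calc dotProduct (J.mulVec ((A x).mulVec g)) h
            = dotProduct h (J.mulVec ((A x).mulVec g)) :=
              dotProduct_comm _ _
          _ = dotProduct (Matrix.vecMul h J) ((A x).mulVec g) :=
              Matrix.dotProduct_mulVec _ _ _
          _ = dotProduct (Jᵀ.mulVec h) ((A x).mulVec g) := by
              rw [Matrix.mulVec_transpose]
          _ = dotProduct ((A x).mulVec g) (Jᵀ.mulVec h) :=
              dotProduct_comm _ _
      rw [hdot]
      have h0 : J.det ≠ 0 := (hdetpos x).ne'
      field_simp
    constructor
    · intro hx ψ hψ hψc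
      have hφ : ContDiff ℝ 1 (fun x => ψ (F x)) := hψ.comp hF
      have hφc : HasCompactSupport (fun x => ψ (F x)) := hψc.comp_homeomorph e
      rw [key1 ψ, key2 ψ hψ]
      exact hx _ hφ hφc
    · intro hy φ hφ hφc
      have hψ : ContDiff ℝ 1 (fun y => φ (Finv y)) := hφ.comp hFinv
      have hψc : HasCompactSupport (fun y => φ (Finv y)) := hφc.comp_homeomorph e.symm
      have h0 := hy _ hψ hψc
      rw [key1, key2 _ hψ] at h0
      simp only [hl] at h0
      exact h0
  · intro t ht x hx
    have h1 : Finv x = x := by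
      conv_lhs => rw [← hFid x hx]
      exact hl x
    rw [h1]
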